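/- Let D_t be the acyclic digraph with vertex set X ∪ Y ∪ {z} ∪ Y' ∪ X', where X = {x_1,…,x_t}, X' = {x'_1,…,x'_t}, Y = {y_1,…,y_r}, Y' = {y'_1,…,y'_r}, and arcs x_i→x_{i+1}, x'_i→x'_{i+1} for i ∈ [t−1], and x_t→y_j, y_j→z, z→y'_j, y'_j→x'_1 for j ∈ [r]. Then for every Q ⊆ Y and Q' ⊆ Y', the set Q ∪ {z} ∪ Q' is a connected convex set of D_t. In particular, D_t has at least 2^{2r} connected convex sets. -/

import Mathlib

/-!
Digraphs are given by an arc relation `A : V → V → Prop` on a vertex type `V`.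
A directed path from `a` to `b` is encoded as `a :: (l ++ [b])` where the list
satisfies `List.Chain A` (consecutive arcs) and `List.Nodup` (distinct vertices);
`l` is the list of internal vertices.
-/

variable {V : Type*}

/-- A non-empty vertex set `X` is convex if no directed path between two
vertices of `X` contains a vertex not in `X`. -/
def ConvexIn (A : V → V → Prop) (X : Set V) : Prop :=
  X.Nonempty ∧ ∀ a b : V, ∀ l : List V, a ∈ X → b ∈ X →
    List.Chain A a (l ++ [b]) → (a :: (l ++ [b])).Nodup → ∀ w ∈ l, w ∈ X

/-- A vertex set is connected if the underlying undirected graph induced on it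
is connected. -/
def ConnectedIn (A : V → V → Prop) (X : Set V) : Prop :=
  ((SimpleGraph.fromRel A).induce X).Connected

/-- A digraph is acyclic if it has no directed cycle, equivalently no
nontrivial directed closed walk. -/
def AcyclicDigraph (A : V → V → Prop) : Prop :=
  ∀ v, ¬ Relation.TransGen A v v

/-- A digraph is connected if its underlying undirected graph is connected. -/
def DigraphConnected (A : V → V → Prop) : Prop :=
  (SimpleGraph.fromRel A).Connected

/-- A source is a vertex with in-degree zero. -/
def IsSourceIn (A : V → V → Prop) (v : V) : Prop := ∀ u, ¬ A u v

/-- A sink is a vertex with out-degree zero. -/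
def IsSinkIn (A : V → V → Prop) (v : V) : Prop := ∀ u, ¬ A v u

/-- A cut-vertex of a connected digraph: deleting it disconnects the
underlying undirected graph. -/
def IsCutVertexIn (A : V → V → Prop) (v : V) : Prop :=
  ¬ ((SimpleGraph.fromRel A).induce {u | u ≠ v}).Connected

/-- Vertices of the digraph `D_t` (with parameter `r`): two directed paths
`x 0 → ⋯ → x (t-1)` and `x' 0 → ⋯ → x' (t-1)`, joined through the vertex
sets `Y = {y j}`, `Y' = {y' j}` (`j : Fin r`) and a middle vertex `z`. -/
inductive DV (t r : ℕ) : Type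
  | x : Fin t → DV t r
  | y : Fin r → DV t r
  | z : DV t r
  | y' : Fin r → DV t r
  | x' : Fin t → DV t r
deriving DecidableEq

/-- Arcs of `D_t`: `x i → x (i+1)` and `x' i → x' (i+1)` along the two paths,
and `x_t → y j`, `y j → z`, `z → y' j`, `y' j → x'_1` for each `j`. -/
def DAdj {t r : ℕ} : DV t r → DV t r → Prop
  | DV.x i, DV.x j => (i : ℕ) + 1 = (j : ℕ)
  | DV.x' i, DV.x' j => (i : ℕ) + 1 = (j : ℕ)
  | DV.x i, DV.y _ => (i : ℕ) + 1 = t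
  | DV.y _, DV.z => True
  | DV.z, DV.y' _ => True
  | DV.y' _, DV.x' j => (j : ℕ) = 0
  | _, _ => False


/-!
Rank the vertices by the layers `x_1, …, x_t, Y, z, Y', x'_1, …, x'_t`, so that every arc
raises the rank. On a directed path the rank then increases strictly, so every internal vertex
of a path between two vertices of `Q ∪ {z} ∪ Q'` (ranks in `[t, t + 2]`) has rank `t + 1`, i.e.
it is `z`. Connectivity holds because every vertex of `Q ∪ Q'` is adjacent to `z`.
-/

section Rank

variable {V α : Type*} [Preorder α] {A : V → V → Prop} {f : V → α}

theorem lt_and_lt_of_mem_of_isChain (hf : ∀ u v, A u v → f u < f v) {a b w : V} {l : List V}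
    (hc : List.IsChain A (a :: (l ++ [b]))) (hw : w ∈ l) : f a < f w ∧ f w < f b := by
  have hp : (a :: (l ++ [b])).Pairwise (fun u v => f u < f v) :=
    List.pairwise_map.mp ((List.isChain_map f).mpr (hc.imp hf)).pairwise
  rw [List.pairwise_cons, List.pairwise_append] at hp
  exact ⟨hp.1 w (by simp [hw]), hp.2.2.2 w hw b (by simp)⟩

theorem convexIn_of_rank (hf : ∀ u v, A u v → f u < f v) {X : Set V} (hne : X.Nonempty)
    (hX : ∀ a ∈ X, ∀ b ∈ X, ∀ w, f a < f w → f w < f b → w ∈ X) : ConvexIn A X :=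
  ⟨hne, fun a b _ ha hb hc _ w hw =>
    let h := lt_and_lt_of_mem_of_isChain hf hc hw
    hX a ha b hb w h.1 h.2⟩

end Rank

theorem connectedIn_of_forall_adj {V : Type*} {A : V → V → Prop} {X : Set V} {c : V}
    (hc : c ∈ X) (hX : ∀ v ∈ X, v ≠ c → A c v ∨ A v c) : ConnectedIn A X := by
  refine (SimpleGraph.connected_iff_exists_forall_reachable _).mpr ⟨⟨c, hc⟩, ?_⟩
  rintro ⟨v, hv⟩
  by_cases hvc : v = c
  · subst hvc
    rfl
  · exact SimpleGraph.Adj.reachable <| by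
      simpa [SimpleGraph.fromRel_adj, Ne.symm hvc] using hX v hv hvc

namespace DV

variable {t r : ℕ}

def toSum : DV t r → Fin t ⊕ Fin r ⊕ Unit ⊕ Fin r ⊕ Fin t
  | x i => .inl i
  | y j => .inr (.inl j)
  | z => .inr (.inr (.inl ()))
  | y' j => .inr (.inr (.inr (.inl j)))
  | x' i => .inr (.inr (.inr (.inr i)))

instance : Finite (DV t r) :=
  Finite.of_injective toSum <| by
    rintro (_ | _ | _ | _ | _) (_ | _ | _ | _ | _) h <;> simp_all [toSum]

def rank : DV t r → ℕ
  | x i => i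
  | y _ => t
  | z => t + 1
  | y' _ => t + 2
  | x' i => t + 3 + i

theorem rank_lt_of_dAdj {u v : DV t r} (h : DAdj u v) : u.rank < v.rank := by
  cases u <;> cases v <;> simp [DAdj, rank] at h ⊢ <;> omega

theorem eq_z_of_rank_eq {w : DV t r} (hw : w.rank = t + 1) : w = z := by
  cases w with
  | x i => have := i.isLt; simp [rank] at hw; omega
  | x' i => simp [rank] at hw; omega
  | _ => simp_all [rank]

def midSet (Q Q' : Set (Fin r)) : Set (DV t r) := (y '' Q) ∪ {z} ∪ (y' '' Q')

theorem z_mem_midSet (Q Q' : Set (Fin r)) : (z : DV t r) ∈ midSet Q Q' :=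
  Or.inl (Or.inr rfl)

theorem rank_mem_Icc_of_mem_midSet {Q Q' : Set (Fin r)} {v : DV t r} (hv : v ∈ midSet Q Q') :
    t ≤ v.rank ∧ v.rank ≤ t + 2 := by
  rcases hv with (⟨j, -, rfl⟩ | rfl) | ⟨j, -, rfl⟩ <;> simp [rank]

theorem connectedIn_midSet (Q Q' : Set (Fin r)) : ConnectedIn DAdj (midSet Q Q' : Set (DV t r)) :=
  connectedIn_of_forall_adj (z_mem_midSet Q Q') <| by
    rintro v ((⟨j, -, rfl⟩ | rfl) | ⟨j, -, rfl⟩) hv <;> simp_all [DAdj]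

theorem convexIn_midSet (Q Q' : Set (Fin r)) : ConvexIn DAdj (midSet Q Q' : Set (DV t r)) :=
  convexIn_of_rank (fun _ _ h => rank_lt_of_dAdj h) ⟨z, z_mem_midSet Q Q'⟩ <| by
    intro a ha b hb w haw hwb
    have := rank_mem_Icc_of_mem_midSet ha
    have := rank_mem_Icc_of_mem_midSet hb
    rw [eq_z_of_rank_eq (w := w) (by omega)]
    exact z_mem_midSet Q Q'

theorem midSet_injective :
    Function.Injective (fun p : Set (Fin r) × Set (Fin r) => (midSet p.1 p.2 : Set (DV t r))) := by
  rintro ⟨Q₁, Q₁'⟩ ⟨Q₂, Q₂'⟩ h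
  simp only [Prod.mk.injEq]
  constructor <;> ext j
  · simpa [midSet] using Set.ext_iff.mp h (y j)
  · simpa [midSet] using Set.ext_iff.mp h (y' j)

end DV

theorem stmt_15_general (t r : ℕ) :
    (∀ Q Q' : Set (Fin r),
      ConnectedIn DAdj ((DV.y '' Q) ∪ {DV.z} ∪ (DV.y' '' Q') : Set (DV t r)) ∧
      ConvexIn DAdj ((DV.y '' Q) ∪ {DV.z} ∪ (DV.y' '' Q') : Set (DV t r))) ∧
    2 ^ (2 * r) ≤
      {X : Set (DV t r) | ConnectedIn DAdj X ∧ ConvexIn DAdj X}.ncard := by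
  refine ⟨fun Q Q' => ⟨DV.connectedIn_midSet Q Q', DV.convexIn_midSet Q Q'⟩, ?_⟩
  calc 2 ^ (2 * r) = (Set.univ : Set (Set (Fin r) × Set (Fin r))).ncard := by
        simp [Nat.card_eq_fintype_card, two_mul, pow_add]
    _ ≤ _ := Set.ncard_le_ncard_of_injOn (fun p => DV.midSet p.1 p.2)
        (fun p _ => (⟨DV.connectedIn_midSet p.1 p.2, DV.convexIn_midSet p.1 p.2⟩ : _ ∧ _))
        DV.midSet_injective.injOn

/-- For all `Q ⊆ Y` and `Q' ⊆ Y'`, the set `Q ∪ {z} ∪ Q'` is a connected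
convex set of `D_t`; hence `D_t` has at least `2^(2r)` connected convex sets. -/
theorem stmt_15 (t r : ℕ) (ht : 1 ≤ t) :
    (∀ Q Q' : Set (Fin r),
      ConnectedIn DAdj ((DV.y '' Q) ∪ {DV.z} ∪ (DV.y' '' Q') : Set (DV t r)) ∧
      ConvexIn DAdj ((DV.y '' Q) ∪ {DV.z} ∪ (DV.y' '' Q') : Set (DV t r))) ∧
    2 ^ (2 * r) ≤
      {X : Set (DV t r) | ConnectedIn DAdj X ∧ ConvexIn DAdj X}.ncard :=
  stmt_15_general t r
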